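/- For all p₁ < p₂ in (0,1) there exists ε > 0, depending only on p₁ and p₂, such that for every finite graph G = (V,E) one has ν^{p₁} ≼ (ν^{p₂})^{(-,ε)}, where ν^p denotes the q=2 random-cluster measure on {0,1}^E. -/
import Mathlib


/-!
The q = 2 random-cluster model on a finite graph `G = (V, E)`. Edge configurations are
functions `η : G.edgeSet → Bool` (`true` = open/present, `false` = closed/absent);
probability measures on the finite configuration space are represented by weight functions.
-/

open Finset

/-- The conditional probability `μ(η(e) = 1 | η ≡ ξ off e)`. -/
noncomputable def condOne {I : Type*} [DecidableEq I] [Fintype I]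
    (μ : (I → Bool) → ℝ) (e : I) (ξ : I → Bool) : ℝ :=
  μ (Function.update ξ e true) /
    (μ (Function.update ξ e true) + μ (Function.update ξ e false))

/-- The spanning subgraph of `G` consisting of the `η`-open edges. -/
def openGraph {V : Type*} (G : SimpleGraph V) (η : G.edgeSet → Bool) : SimpleGraph V :=
  SimpleGraph.fromEdgeSet {f : Sym2 V | ∃ hf : f ∈ G.edgeSet, η ⟨f, hf⟩ = true}

/-- `k(η)`: the number of connected components (isolated vertices included) of the spanning
subgraph of `η`-open edges. -/
noncomputable def numComponents {V : Type*} (G : SimpleGraph V) (η : G.edgeSet → Bool) : ℕ :=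
  Nat.card (openGraph G η).ConnectedComponent

/-- The (unnormalized) q = 2 random-cluster weight `2^{k(η)} ∏_e p^{η(e)} (1-p)^{1-η(e)}`. -/
noncomputable def rcNum {V : Type*} [DecidableEq V] [Fintype V] (G : SimpleGraph V)
    [DecidableRel G.Adj] (p : ℝ) (η : G.edgeSet → Bool) : ℝ :=
  2 ^ numComponents G η * ∏ e : G.edgeSet, (if η e then p else 1 - p)

/-- The q = 2 random-cluster measure `ν^p` on `{0,1}^E`. -/
noncomputable def rcWeight {V : Type*} [DecidableEq V] [Fintype V] (G : SimpleGraph V)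
    [DecidableRel G.Adj] (p : ℝ) (η : G.edgeSet → Bool) : ℝ :=
  rcNum G p η / ∑ η' : G.edgeSet → Bool, rcNum G p η'

/-- Stochastic domination `μ ≼ ν` for weight functions: `∑ f dμ ≤ ∑ f dν` for every
nondecreasing `f` (coordinatewise order, with `false < true`, i.e. `-1 < +1`). -/
def Dominates {V : Type*} [DecidableEq V] [Fintype V] (μ ν : (V → Bool) → ℝ) : Prop :=
  ∀ f : (V → Bool) → ℝ, Monotone f →
    ∑ σ : V → Bool, μ σ * f σ ≤ ∑ σ : V → Bool, ν σ * f σ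

/-- The weight function of `μ^{(-,ε)}`: the law of `s ↦ min (X s) (Z s)` where `X ∼ μ`
and, independently, the `Z s` are i.i.d. with `P(Z s = true) = 1 - ε`
(`true` = `+1`/`1`, `false` = `-1`/`0`). -/
noncomputable def minusEps {V : Type*} [DecidableEq V] [Fintype V] (μ : (V → Bool) → ℝ)
    (ε : ℝ) : (V → Bool) → ℝ := fun η =>
  ∑ σ : V → Bool, μ σ *
    ∏ s : V, (if η s then (if σ s then 1 - ε else 0) else (if σ s then ε else 1))

section Graph
variable {V : Type*} [Fintype V]

/-- colorings constant on adjacent vertices -/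
def colorSpace (H : SimpleGraph V) : Submodule (ZMod 2) (V → ZMod 2) where
  carrier := {x | ∀ ⦃u v⦄, H.Adj u v → x u = x v}
  add_mem' := fun hx hy => by intro u v h; simp [Pi.add_apply, hx h, hy h]
  zero_mem' := fun _ _ _ => rfl
  smul_mem' := fun c x hx => by intro u v h; simp [Pi.smul_apply, hx h]

lemma mem_colorSpace {H : SimpleGraph V} {x : V → ZMod 2} :
    x ∈ colorSpace H ↔ ∀ ⦃u v⦄, H.Adj u v → x u = x v := Iff.rfl

lemma colorSpace_anti {H H' : SimpleGraph V} (h : H ≤ H') : colorSpace H' ≤ colorSpace H :=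
  fun x hx u v huv => hx (h huv)

lemma colorSpace_sup (H H' : SimpleGraph V) :
    colorSpace (H ⊔ H') = colorSpace H ⊓ colorSpace H' := by
  ext x
  simp only [mem_colorSpace, Submodule.mem_inf]
  constructor
  · exact fun hx => ⟨fun u v h => hx (by simp [h]), fun u v h => hx (by simp [h])⟩
  · rintro ⟨h1, h2⟩ u v huv
    rcases (SimpleGraph.sup_adj _ _ _ _).1 huv with h | h
    · exact h1 h
    · exact h2 h

/-- the linear map sending a coloring of components to a coloring of vertices -/
noncomputable def compMap (H : SimpleGraph V) :
    (H.ConnectedComponent → ZMod 2) →ₗ[ZMod 2] (V → ZMod 2) where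
  toFun f := f ∘ H.connectedComponentMk
  map_add' _ _ := rfl
  map_smul' _ _ := rfl

lemma compMap_injective (H : SimpleGraph V) : Function.Injective (compMap H) := by
  intro f g h
  funext c
  induction c using SimpleGraph.ConnectedComponent.ind with
  | _ v => exact congrFun h v

lemma range_compMap (H : SimpleGraph V) : LinearMap.range (compMap H) = colorSpace H := by
  ext x
  constructor
  · rintro ⟨f, rfl⟩ u v huv
    exact congrArg f (SimpleGraph.ConnectedComponent.connectedComponentMk_eq_of_adj huv)
  · intro hx
    have hreach : ∀ u v : V, H.Reachable u v → x u = x v := by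
      intro u v h
      obtain ⟨w⟩ := h
      induction w with
      | nil => rfl
      | cons h p ih => exact (hx h).trans ih
    refine ⟨SimpleGraph.ConnectedComponent.lift x (fun u v p _ => hreach u v ⟨p⟩), ?_⟩
    funext v
    show SimpleGraph.ConnectedComponent.lift x (fun u v p _ => hreach u v ⟨p⟩)
      (H.connectedComponentMk v) = x v
    exact SimpleGraph.ConnectedComponent.lift_mk

lemma finrank_colorSpace (H : SimpleGraph V) :
    Module.finrank (ZMod 2) (colorSpace H) = Nat.card H.ConnectedComponent := by
  have : Fintype H.ConnectedComponent := Fintype.ofFinite _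
  rw [Nat.card_eq_fintype_card, ← Module.finrank_pi (ZMod 2) (ι := H.ConnectedComponent),
    ← range_compMap]
  exact (LinearEquiv.finrank_eq (LinearEquiv.ofInjective _ (compMap_injective H))).symm

variable (G : SimpleGraph V)

lemma bool_sup_eq (x y : Bool) : x ⊔ y = (x || y) := by
  cases x <;> cases y <;> decide

lemma bool_inf_eq (x y : Bool) : x ⊓ y = (x && y) := by
  cases x <;> cases y <;> decide

lemma openGraph_mono {a b : G.edgeSet → Bool} (h : a ≤ b) : openGraph G a ≤ openGraph G b := by
  apply SimpleGraph.fromEdgeSet_mono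
  rintro f ⟨hf, ha⟩
  refine ⟨hf, ?_⟩
  have hle := h ⟨f, hf⟩
  rw [ha] at hle
  exact le_antisymm (by cases b ⟨f, hf⟩ <;> simp) hle

lemma openGraph_sup (a b : G.edgeSet → Bool) :
    openGraph G (a ⊔ b) = openGraph G a ⊔ openGraph G b := by
  unfold openGraph
  rw [← SimpleGraph.fromEdgeSet_union]
  congr 1
  ext f
  simp only [Set.mem_setOf_eq, Set.mem_union]
  constructor
  · rintro ⟨hf, hab⟩
    rw [Pi.sup_apply, bool_sup_eq, Bool.or_eq_true] at hab
    rcases hab with h | h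
    · exact Or.inl ⟨hf, h⟩
    · exact Or.inr ⟨hf, h⟩
  · rintro (⟨hf, h⟩ | ⟨hf, h⟩) <;> refine ⟨hf, ?_⟩ <;>
      rw [Pi.sup_apply, bool_sup_eq, Bool.or_eq_true]
    · exact Or.inl h
    · exact Or.inr h

lemma numComponents_anti {a b : G.edgeSet → Bool} (h : a ≤ b) :
    numComponents G b ≤ numComponents G a := by
  rw [numComponents, numComponents, ← finrank_colorSpace, ← finrank_colorSpace]
  exact Submodule.finrank_mono (colorSpace_anti (openGraph_mono G h))

lemma numComponents_supermod (a b : G.edgeSet → Bool) :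
    numComponents G a + numComponents G b ≤
      numComponents G (a ⊔ b) + numComponents G (a ⊓ b) := by
  rw [numComponents, numComponents, numComponents, numComponents,
    ← finrank_colorSpace, ← finrank_colorSpace, ← finrank_colorSpace, ← finrank_colorSpace]
  have h1 : colorSpace (openGraph G (a ⊔ b)) =
      colorSpace (openGraph G a) ⊓ colorSpace (openGraph G b) := by
    rw [openGraph_sup]; exact colorSpace_sup _ _
  have h2 : colorSpace (openGraph G a) ⊔ colorSpace (openGraph G b) ≤
      colorSpace (openGraph G (a ⊓ b)) :=
    sup_le (colorSpace_anti (openGraph_mono G inf_le_left))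
      (colorSpace_anti (openGraph_mono G inf_le_right))
  have base := Submodule.finrank_sup_add_finrank_inf_eq
    (colorSpace (openGraph G a)) (colorSpace (openGraph G b))
  have m := Submodule.finrank_mono h2
  rw [h1]
  omega

end Graph

lemma bool_sup_eq' (x y : Bool) : x ⊔ y = (x || y) := by cases x <;> cases y <;> decide
lemma bool_inf_eq' (x y : Bool) : x ⊓ y = (x && y) := by cases x <;> cases y <;> decide

section Abstract
variable {I : Type*} [DecidableEq I] [Fintype I]

noncomputable def Wgt (κ : (I → Bool) → ℕ) (p : ℝ) (η : I → Bool) : ℝ :=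
  2 ^ κ η * ∏ s : I, (if η s then p else 1 - p)

noncomputable def wfac (ε : ℝ) (x y : Bool) : ℝ :=
  if x then (if y then 1 - ε else 0) else (if y then ε else 1)

noncomputable def gfun (p₁ p₂ ε : ℝ) (a b σ : I → Bool) (s : I) (y : Bool) : ℝ :=
  if a s = true ∧ b s = false then
    (if y then p₁ / (1 - p₁) * ε / (1 - ε)
     else p₁ / (1 - p₁) * ((1 - p₂) / p₂) / (1 - ε))
  else (if y = σ s then 1 else 0)

lemma minusEps_eq (μ : (I → Bool) → ℝ) (ε : ℝ) (η : I → Bool) :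
    minusEps μ ε η = ∑ σ : I → Bool, μ σ * ∏ s, wfac ε (η s) (σ s) := rfl

lemma Wgt_pos {κ : (I → Bool) → ℕ} {p : ℝ} (hp : p ∈ Set.Ioo (0:ℝ) 1) (η : I → Bool) :
    0 < Wgt κ p η := by
  apply mul_pos (by positivity)
  apply Finset.prod_pos
  intro s _
  by_cases h : η s = true <;> simp [h] <;> linarith [hp.1, hp.2]

lemma wfac_nonneg {ε : ℝ} (h0 : 0 ≤ ε) (h1 : ε ≤ 1) (x y : Bool) : 0 ≤ wfac ε x y := by
  rw [wfac]; split_ifs <;> linarith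

lemma minusEps_nonneg {μ : (I → Bool) → ℝ} {ε : ℝ} (hμ : ∀ σ, 0 ≤ μ σ)
    (h0 : 0 ≤ ε) (h1 : ε ≤ 1) (η : I → Bool) : 0 ≤ minusEps μ ε η := by
  rw [minusEps_eq]
  apply Finset.sum_nonneg
  intro σ _
  exact mul_nonneg (hμ σ) (Finset.prod_nonneg fun s _ => wfac_nonneg h0 h1 _ _)

lemma sum_wfac_eq_one {ε : ℝ} (σ : I → Bool) :
    ∑ η : I → Bool, ∏ s, wfac ε (η s) (σ s) = 1 := by
  have h := Finset.prod_univ_sum (fun _ : I => (univ : Finset Bool))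
    (fun s y => wfac ε y (σ s))
  rw [Fintype.piFinset_univ] at h
  rw [← h]
  apply Finset.prod_eq_one
  intro s _
  rw [Fintype.sum_bool]
  cases hσ : σ s <;> simp [wfac, hσ]

lemma sum_minusEps (μ : (I → Bool) → ℝ) (ε : ℝ) :
    ∑ η : I → Bool, minusEps μ ε η = ∑ σ : I → Bool, μ σ := by
  simp only [minusEps_eq]
  rw [Finset.sum_comm]
  apply Finset.sum_congr rfl
  intro σ _
  rw [← Finset.mul_sum, sum_wfac_eq_one, mul_one]

lemma key_pointwise (κ : (I → Bool) → ℕ)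
    (hmono : ∀ a b : I → Bool, a ≤ b → κ b ≤ κ a)
    (hsup : ∀ a b : I → Bool, κ a + κ b ≤ κ (a ⊔ b) + κ (a ⊓ b))
    {p₁ p₂ ε : ℝ} (hp₁ : p₁ ∈ Set.Ioo (0:ℝ) 1) (hp₂ : p₂ ∈ Set.Ioo (0:ℝ) 1)
    (hε : ε ∈ Set.Ioo (0:ℝ) 1)
    (hkey : p₁ / (1 - p₁) * (ε + (1 - p₂) / p₂) ≤ 1 - ε) (a b : I → Bool) :
    Wgt κ p₁ a * minusEps (Wgt κ p₂) ε b ≤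
      Wgt κ p₁ (a ⊓ b) * minusEps (Wgt κ p₂) ε (a ⊔ b) := by
  classical
  obtain ⟨hp₁0, hp₁1⟩ := hp₁
  obtain ⟨hp₂0, hp₂1⟩ := hp₂
  obtain ⟨hε0, hε1⟩ := hε
  have hq₁ : (0:ℝ) < 1 - p₁ := by linarith
  have hq₂ : (0:ℝ) < 1 - p₂ := by linarith
  have h1ε : (0:ℝ) < 1 - ε := by linarith
  have hq₁' : (1:ℝ) - p₁ ≠ 0 := ne_of_gt hq₁
  have hp₂' : p₂ ≠ 0 := ne_of_gt hp₂0
  have h1ε' : (1:ℝ) - ε ≠ 0 := ne_of_gt h1ε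
  have hg_nonneg : ∀ (σ : I → Bool) s y, 0 ≤ gfun p₁ p₂ ε a b σ s y := by
    intro σ s y
    rw [gfun]
    split_ifs <;> positivity
  have hgsum : ∀ (σ : I → Bool) s, ∑ y : Bool, gfun p₁ p₂ ε a b σ s y ≤ 1 := by
    intro σ s
    rw [Fintype.sum_bool]
    by_cases hD : a s = true ∧ b s = false
    · rw [gfun, gfun, if_pos hD, if_pos hD, if_pos rfl,
        if_neg (by exact Bool.false_ne_true)]
      have e : p₁ / (1 - p₁) * ε / (1 - ε) + p₁ / (1 - p₁) * ((1 - p₂) / p₂) / (1 - ε)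
          = (p₁ / (1 - p₁) * (ε + (1 - p₂) / p₂)) / (1 - ε) := by ring
      rw [e, div_le_one h1ε]
      exact hkey
    · rw [gfun, gfun, if_neg hD, if_neg hD]
      cases hσ : σ s <;> simp
  have hwf0 : ∀ x y, 0 ≤ wfac ε x y := wfac_nonneg (le_of_lt hε0) (le_of_lt hε1)
  set S : Finset (I → Bool) := univ.filter (fun τ => b ≤ τ) with hS
  -- expand LHS as a sum over S
  have expand : Wgt κ p₁ a * minusEps (Wgt κ p₂) ε b
      = ∑ τ ∈ S, Wgt κ p₁ a * (Wgt κ p₂ τ * ∏ s, wfac ε (b s) (τ s)) := by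
    rw [minusEps_eq, Finset.mul_sum]
    refine (Finset.sum_subset (Finset.subset_univ S) ?_).symm
    intro τ _ hτ
    have hex : ∃ s, b s = true ∧ τ s = false := by
      by_contra hc
      push_neg at hc
      refine hτ (Finset.mem_filter.2 ⟨Finset.mem_univ _, fun s => ?_⟩)
      cases hbs : b s
      · exact Bool.false_le _
      · have h2 := hc s hbs
        exact Bool.le_iff_imp.mpr fun _ => Bool.eq_true_of_not_eq_false h2
    obtain ⟨s, hbs, hτs⟩ := hex
    have hz : wfac ε (b s) (τ s) = 0 := by simp [wfac, hbs, hτs]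
    rw [Finset.prod_eq_zero (Finset.mem_univ s) hz, mul_zero, mul_zero]
  -- the termwise inequality
  have term : ∀ σ : I → Bool, ∀ τ ∈ S.filter (fun τ => τ ⊔ a = σ),
      Wgt κ p₁ a * (Wgt κ p₂ τ * ∏ s, wfac ε (b s) (τ s)) ≤
      (Wgt κ p₁ (a ⊓ b) * (Wgt κ p₂ σ * ∏ s, wfac ε ((a ⊔ b) s) (σ s))) *
        ∏ s, gfun p₁ p₂ ε a b σ s (τ s) := by
    intro σ τ hτ
    rw [Finset.mem_filter] at hτ
    obtain ⟨hτS, hτσ⟩ := hτ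
    rw [hS, Finset.mem_filter] at hτS
    have hbτ : b ≤ τ := hτS.2
    have hbs' : ∀ s, b s = true → τ s = true := by
      intro s h
      exact Bool.le_iff_imp.mp (hbτ s) h
    have hprod : (∏ s, (if a s then p₁ else 1 - p₁)) *
          ((∏ s, (if τ s then p₂ else 1 - p₂)) * ∏ s, wfac ε (b s) (τ s))
        = (∏ s, (if (a ⊓ b) s then p₁ else 1 - p₁)) *
          ((∏ s, (if σ s then p₂ else 1 - p₂)) *
            ((∏ s, wfac ε ((a ⊔ b) s) (σ s)) * ∏ s, gfun p₁ p₂ ε a b σ s (τ s))) := by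
      rw [← Finset.prod_mul_distrib, ← Finset.prod_mul_distrib, ← Finset.prod_mul_distrib,
        ← Finset.prod_mul_distrib, ← Finset.prod_mul_distrib]
      apply Finset.prod_congr rfl
      intro s _
      have hσs : σ s = (τ s || a s) := by rw [← hτσ, Pi.sup_apply, bool_sup_eq']
      have hab : (a ⊓ b) s = (a s && b s) := by rw [Pi.inf_apply, bool_inf_eq']
      have hab2 : (a ⊔ b) s = (a s || b s) := by rw [Pi.sup_apply, bool_sup_eq']
      rw [wfac, wfac, gfun, hσs, hab, hab2]
      cases ha : a s <;> cases hb : b s <;> cases ht : τ s <;>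
        simp only [Bool.and_false, Bool.and_true, Bool.or_false, Bool.or_true,
          Bool.false_or, Bool.true_or, Bool.false_and, Bool.true_and,
          if_true, if_false, reduceIte, reduceCtorEq, true_and, false_and, and_true, and_false,
          not_true_eq_false, not_false_eq_true] <;>
        first
          | (exact absurd (hbs' s hb) (by rw [ht]; decide))
          | (field_simp; try ring)
    have hκ : κ a + κ τ ≤ κ (a ⊓ b) + κ σ := by
      have h1 := hsup a τ
      have hsupστ : a ⊔ τ = σ := by rw [← hτσ, sup_comm]
      rw [hsupστ] at h1
      have h2 : κ (a ⊓ τ) ≤ κ (a ⊓ b) := hmono _ _ (inf_le_inf_left a hbτ)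
      omega
    have hWnn : 0 ≤ (∏ s, (if a s then p₁ else 1 - p₁)) *
          ((∏ s, (if τ s then p₂ else 1 - p₂)) * ∏ s, wfac ε (b s) (τ s)) := by
      apply mul_nonneg
      · apply Finset.prod_nonneg; intro s _; split_ifs <;> linarith
      apply mul_nonneg
      · apply Finset.prod_nonneg; intro s _; split_ifs <;> linarith
      · exact Finset.prod_nonneg fun s _ => hwf0 _ _
    calc Wgt κ p₁ a * (Wgt κ p₂ τ * ∏ s, wfac ε (b s) (τ s))
        = ((2:ℝ) ^ (κ a) * 2 ^ (κ τ)) *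
            ((∏ s, (if a s then p₁ else 1 - p₁)) *
              ((∏ s, (if τ s then p₂ else 1 - p₂)) * ∏ s, wfac ε (b s) (τ s))) := by
          rw [Wgt, Wgt]; ring
      _ ≤ ((2:ℝ) ^ (κ (a ⊓ b)) * 2 ^ (κ σ)) *
            ((∏ s, (if a s then p₁ else 1 - p₁)) *
              ((∏ s, (if τ s then p₂ else 1 - p₂)) * ∏ s, wfac ε (b s) (τ s))) := by
          apply mul_le_mul_of_nonneg_right _ hWnn
          rw [← pow_add, ← pow_add]
          exact pow_le_pow_right₀ one_le_two hκ
      _ = (Wgt κ p₁ (a ⊓ b) * (Wgt κ p₂ σ * ∏ s, wfac ε ((a ⊔ b) s) (σ s))) *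
            ∏ s, gfun p₁ p₂ ε a b σ s (τ s) := by
          rw [hprod, Wgt, Wgt]; ring
  -- sum it all up
  have Tnn : ∀ σ : I → Bool,
      0 ≤ Wgt κ p₁ (a ⊓ b) * (Wgt κ p₂ σ * ∏ s, wfac ε ((a ⊔ b) s) (σ s)) := by
    intro σ
    apply mul_nonneg (le_of_lt (Wgt_pos ⟨hp₁0, hp₁1⟩ _))
    exact mul_nonneg (le_of_lt (Wgt_pos ⟨hp₂0, hp₂1⟩ _))
      (Finset.prod_nonneg fun s _ => hwf0 _ _)
  calc Wgt κ p₁ a * minusEps (Wgt κ p₂) ε b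
      = ∑ τ ∈ S, Wgt κ p₁ a * (Wgt κ p₂ τ * ∏ s, wfac ε (b s) (τ s)) := expand
    _ = ∑ σ : I → Bool, ∑ τ ∈ S.filter (fun τ => τ ⊔ a = σ),
          Wgt κ p₁ a * (Wgt κ p₂ τ * ∏ s, wfac ε (b s) (τ s)) :=
        (Finset.sum_fiberwise_of_maps_to (fun τ _ => Finset.mem_univ (τ ⊔ a)) _).symm
    _ ≤ ∑ σ : I → Bool, Wgt κ p₁ (a ⊓ b) * (Wgt κ p₂ σ * ∏ s, wfac ε ((a ⊔ b) s) (σ s)) := by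
        apply Finset.sum_le_sum
        intro σ _
        calc ∑ τ ∈ S.filter (fun τ => τ ⊔ a = σ),
              Wgt κ p₁ a * (Wgt κ p₂ τ * ∏ s, wfac ε (b s) (τ s))
            ≤ ∑ τ ∈ S.filter (fun τ => τ ⊔ a = σ),
              (Wgt κ p₁ (a ⊓ b) * (Wgt κ p₂ σ * ∏ s, wfac ε ((a ⊔ b) s) (σ s))) *
                ∏ s, gfun p₁ p₂ ε a b σ s (τ s) := Finset.sum_le_sum (term σ)
          _ = (Wgt κ p₁ (a ⊓ b) * (Wgt κ p₂ σ * ∏ s, wfac ε ((a ⊔ b) s) (σ s))) *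
                ∑ τ ∈ S.filter (fun τ => τ ⊔ a = σ), ∏ s, gfun p₁ p₂ ε a b σ s (τ s) := by
              rw [Finset.mul_sum]
          _ ≤ (Wgt κ p₁ (a ⊓ b) * (Wgt κ p₂ σ * ∏ s, wfac ε ((a ⊔ b) s) (σ s))) * 1 := by
              apply mul_le_mul_of_nonneg_left _ (Tnn σ)
              calc ∑ τ ∈ S.filter (fun τ => τ ⊔ a = σ), ∏ s, gfun p₁ p₂ ε a b σ s (τ s)
                  ≤ ∑ τ : I → Bool, ∏ s, gfun p₁ p₂ ε a b σ s (τ s) := by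
                    apply Finset.sum_le_sum_of_subset_of_nonneg (Finset.subset_univ _)
                    intro τ _ _
                    exact Finset.prod_nonneg fun s _ => hg_nonneg σ s _
                _ = ∏ s, ∑ y : Bool, gfun p₁ p₂ ε a b σ s y := by
                    have h := Finset.prod_univ_sum (fun _ : I => (univ : Finset Bool))
                      (fun s y => gfun p₁ p₂ ε a b σ s y)
                    rw [Fintype.piFinset_univ] at h
                    rw [← h]
                _ ≤ 1 := Finset.prod_le_one
                    (fun s _ => Finset.sum_nonneg fun y _ => hg_nonneg σ s y)
                    (fun s _ => hgsum σ s)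
          _ = Wgt κ p₁ (a ⊓ b) * (Wgt κ p₂ σ * ∏ s, wfac ε ((a ⊔ b) s) (σ s)) := mul_one _
    _ = Wgt κ p₁ (a ⊓ b) * minusEps (Wgt κ p₂) ε (a ⊔ b) := by
        rw [minusEps_eq, Finset.mul_sum]



lemma abstract_dominates (κ : (I → Bool) → ℕ)
    (hmono : ∀ a b : I → Bool, a ≤ b → κ b ≤ κ a)
    (hsup : ∀ a b : I → Bool, κ a + κ b ≤ κ (a ⊔ b) + κ (a ⊓ b))
    {p₁ p₂ ε : ℝ} (hp₁ : p₁ ∈ Set.Ioo (0:ℝ) 1) (hp₂ : p₂ ∈ Set.Ioo (0:ℝ) 1)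
    (hε : ε ∈ Set.Ioo (0:ℝ) 1)
    (hkey : p₁ / (1 - p₁) * (ε + (1 - p₂) / p₂) ≤ 1 - ε) :
    Dominates (fun η => Wgt κ p₁ η / ∑ η' : I → Bool, Wgt κ p₁ η')
      (minusEps (fun η => Wgt κ p₂ η / ∑ η' : I → Bool, Wgt κ p₂ η') ε) := by
  classical
  intro F hF
  set Z₁ : ℝ := ∑ η' : I → Bool, Wgt κ p₁ η' with hZ₁def
  set Z₂ : ℝ := ∑ η' : I → Bool, Wgt κ p₂ η' with hZ₂def
  have hZ₁ : 0 < Z₁ := Finset.sum_pos (fun η _ => Wgt_pos hp₁ η) Finset.univ_nonempty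
  have hZ₂ : 0 < Z₂ := Finset.sum_pos (fun η _ => Wgt_pos hp₂ η) Finset.univ_nonempty
  set f : (I → Bool) → ℝ := fun η => Wgt κ p₁ η / Z₁ with hfdef
  set g : (I → Bool) → ℝ := minusEps (fun η => Wgt κ p₂ η / Z₂) ε with hgdef
  have hgE : ∀ η, g η = minusEps (Wgt κ p₂) ε η / Z₂ := by
    intro η
    rw [hgdef, minusEps_eq, minusEps_eq]
    rw [Finset.sum_div]
    apply Finset.sum_congr rfl
    intro σ _
    rw [div_mul_eq_mul_div]
  set c : ℝ := F (fun _ => false) with hcdef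
  have hc : ∀ σ, c ≤ F σ := fun σ => hF (fun s => Bool.false_le _)
  set μ : (I → Bool) → ℝ := fun σ => F σ - c with hμdef
  have hμ0 : (0:(I → Bool) → ℝ) ≤ μ := fun σ => sub_nonneg.2 (hc σ)
  have hμmono : Monotone μ := fun x y h => sub_le_sub_right (hF h) c
  have hf0 : (0:(I → Bool) → ℝ) ≤ f := fun η => div_nonneg (Wgt_pos hp₁ η).le hZ₁.le
  have hg0 : (0:(I → Bool) → ℝ) ≤ g := by
    intro η
    rw [hgE]
    apply div_nonneg _ hZ₂.le
    exact minusEps_nonneg (fun σ => (Wgt_pos hp₂ σ).le) hε.1.le hε.2.le η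
  have hsumf : ∑ η : I → Bool, f η = 1 := by
    rw [hfdef, ← Finset.sum_div, ← hZ₁def, div_self hZ₁.ne']
  have hsumg : ∑ η : I → Bool, g η = 1 := by
    calc ∑ η : I → Bool, g η = ∑ η : I → Bool, minusEps (Wgt κ p₂) ε η / Z₂ :=
          Finset.sum_congr rfl (fun η _ => hgE η)
      _ = (∑ η : I → Bool, minusEps (Wgt κ p₂) ε η) / Z₂ := (Finset.sum_div _ _ _).symm
      _ = 1 := by rw [sum_minusEps, ← hZ₂def, div_self hZ₂.ne']
  have hcond : ∀ x y : I → Bool, f x * g y ≤ f (x ⊓ y) * g (x ⊔ y) := by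
    intro x y
    rw [hgE, hgE, hfdef]
    dsimp only
    rw [div_mul_div_comm, div_mul_div_comm, div_le_div_iff_of_pos_right (mul_pos hZ₁ hZ₂)]
    exact key_pointwise κ hmono hsup hp₁ hp₂ hε hkey x y
  have hH := holley f g μ hμ0 hf0 hg0 hμmono (hsumf.trans hsumg.symm) hcond
  have keyeq : ∀ h : (I → Bool) → ℝ,
      ∑ σ : I → Bool, h σ * F σ = (∑ σ : I → Bool, μ σ * h σ) + c * ∑ σ : I → Bool, h σ := by
    intro h
    rw [Finset.mul_sum, ← Finset.sum_add_distrib]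
    apply Finset.sum_congr rfl
    intro σ _
    rw [hμdef]
    ring
  calc ∑ σ : I → Bool, f σ * F σ
      = (∑ σ : I → Bool, μ σ * f σ) + c * ∑ σ : I → Bool, f σ := keyeq f
    _ ≤ (∑ σ : I → Bool, μ σ * g σ) + c * ∑ σ : I → Bool, g σ := by
        rw [hsumf, hsumg]; linarith [hH]
    _ = ∑ σ : I → Bool, g σ * F σ := (keyeq g).symm

end Abstract

theorem rc_downward_movable (p₁ p₂ : ℝ) (hp₁ : p₁ ∈ Set.Ioo (0 : ℝ) 1)
    (hp₂ : p₂ ∈ Set.Ioo (0 : ℝ) 1) (h12 : p₁ < p₂) :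
    ∃ ε ∈ Set.Ioo (0 : ℝ) 1, ∀ (V : Type) [DecidableEq V] [Fintype V]
      (G : SimpleGraph V) [DecidableRel G.Adj],
        Dominates (rcWeight G p₁) (minusEps (rcWeight G p₂) ε) := by
  classical
  obtain ⟨hp₁0, hp₁1⟩ := hp₁
  obtain ⟨hp₂0, hp₂1⟩ := hp₂
  refine ⟨(p₂ - p₁) / (2 * p₂), ⟨div_pos (by linarith) (by positivity), ?_⟩, ?_⟩
  · rw [div_lt_one (by positivity)]
    linarith
  · set ε : ℝ := (p₂ - p₁) / (2 * p₂) with hεdef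
    have hε0 : 0 < ε := div_pos (by linarith) (by positivity)
    have hε1 : ε < 1 := by rw [hεdef, div_lt_one (by positivity)]; linarith
    have hεp₂ : ε * p₂ ≤ p₂ - p₁ := by
      rw [hεdef, div_mul_eq_mul_div, div_le_iff₀ (by positivity)]
      nlinarith
    have hkey : p₁ / (1 - p₁) * (ε + (1 - p₂) / p₂) ≤ 1 - ε := by
      have e1 : p₁ / (1 - p₁) * (ε + (1 - p₂) / p₂)
          = (p₁ * (ε * p₂ + (1 - p₂))) / ((1 - p₁) * p₂) := by
        field_simp
        try ring
      rw [e1, div_le_iff₀ (by nlinarith)]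
      nlinarith
    intro V _ _ G _
    exact abstract_dominates (numComponents G)
      (fun a b h => numComponents_anti G h) (numComponents_supermod G)
      ⟨hp₁0, hp₁1⟩ ⟨hp₂0, hp₂1⟩ ⟨hε0, hε1⟩ hkey
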